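/- The closure H of the cyclic subgroup generated by 1 + X^ℓ in the multiplicative group K^× is a compact subgroup of K^×, H is isomorphic as a topological group to the additive group ℤ_p of p-adic integers, and H ⊆ 𝔽[[X^ℓ]] := {∑_{k=0}^∞ a_k X^{ℓk} : (a_k) ∈ 𝔽^{ℕ₀}}. -/

import Mathlib

/- CONTEXT: `p` a prime, `𝔽 = ZMod p` the field with `p` elements, `ℓ ≥ 2` coprime to
`p`.  `K = 𝔽((X))` (realized as `LaurentSeries (ZMod p)`) with its X-adic valuation
topology; `X` is the Hahn series `single 1 1`, and `K^×` is the set of nonzero elements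
of `K` under multiplication, with the topology induced from `K`.  `H` is the closure in
`K` of the cyclic subgroup `{(1+X^ℓ)^m : m ∈ ℤ}` generated by `1 + X^ℓ`; `ℤ_p = ℤ_[p]`
is the compact topological group of `p`-adic integers.
`𝔽[[X^ℓ]] = {∑_{k=0}^∞ a_k X^{ℓk} : (a_k) ∈ 𝔽^ℕ}` is the set of Laurent series
supported on `ℓℕ`. -/

noncomputable section

variable (p : ℕ) [Fact p.Prime]

/-- `X ∈ 𝔽((X))`. -/
def Xvar : LaurentSeries (ZMod p) := HahnSeries.single (1 : ℤ) (1 : ZMod p)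

/-- The closure `H` of the cyclic subgroup generated by `1 + X^ℓ` in `K^×`. -/
def Hclos (ℓ : ℕ) : Set (LaurentSeries (ZMod p)) :=
  closure {z : LaurentSeries (ZMod p) | ∃ m : ℤ, z = (1 + Xvar p ^ ℓ) ^ m}

/-- `𝔽[[X^ℓ]] = {∑_{k=0}^∞ a_k X^{ℓk} : (a_k) ∈ 𝔽^ℕ}`. -/
def powerSeriesInXl (ℓ : ℕ) : Set (LaurentSeries (ZMod p)) :=
  {z | ∀ j : ℤ, z.coeff j ≠ 0 → ∃ k : ℕ, j = ℓ * k}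

namespace PfAux
open Filter Multiplicative

local notation "ℤₘ₀" => WithZero (Multiplicative ℤ)

variable (ℓ : ℕ)

def uu : LaurentSeries (ZMod p) := 1 + Xvar p ^ ℓ

/-- `↑(ofAdd (-D))` as an element of `ℤₘ₀`. -/
def bC (D : ℤ) : ℤₘ₀ := ((Multiplicative.ofAdd (-D) : Multiplicative ℤ) : ℤₘ₀)

lemma bC_lt_one {D : ℤ} (hD : 0 < D) : bC D < 1 := by
  rw [bC, ← WithZero.coe_one, WithZero.coe_lt_coe, ← ofAdd_zero, Multiplicative.ofAdd_lt]
  omega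

lemma bC_mono {D E : ℤ} (h : D ≤ E) : bC E ≤ bC D := by
  rw [bC, bC, WithZero.coe_le_coe, Multiplicative.ofAdd_le]
  omega

lemma bC_ne_zero (D : ℤ) : bC D ≠ 0 := WithZero.coe_ne_zero

lemma charK : CharP (LaurentSeries (ZMod p)) p :=
  charP_of_injective_ringHom (HahnSeries.C_injective (Γ := ℤ) (R := ZMod p)) p

lemma frob (n : ℕ) : uu p ℓ ^ (p ^ n) = 1 + (Xvar p) ^ (ℓ * p ^ n) := by
  haveI := charK p
  rw [uu, add_pow_char_pow, one_pow, ← pow_mul]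

lemma Xpow (n : ℕ) : (Xvar p) ^ n = HahnSeries.single ((n : ℕ) : ℤ) (1 : ZMod p) := by
  rw [Xvar, HahnSeries.single_pow]; simp

lemma val_Xpow (n : ℕ) :
    Valued.v ((Xvar p) ^ n : LaurentSeries (ZMod p)) = bC n := by
  rw [Xvar, HahnSeries.single_pow, bC]
  simpa [WithZero.exp] using LaurentSeries.valuation_single_zpow (K := ZMod p) (n : ℤ)

lemma val_u (hℓ : 0 < ℓ) : Valued.v (uu p ℓ) = 1 := by
  rw [uu, Valuation.map_add_eq_of_lt_left]
  · exact Valued.v.map_one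
  · rw [Valued.v.map_one, val_Xpow]
    exact bC_lt_one (by exact_mod_cast hℓ)

lemma u_ne (hℓ : 0 < ℓ) : uu p ℓ ≠ 0 := by
  intro h
  have := val_u p ℓ hℓ
  rw [h, Valued.v.map_zero] at this
  exact zero_ne_one this

lemma val_zpow_sub_one {w : LaurentSeries (ZMod p)} {c : ℤₘ₀} (hc : c < 1)
    (hw : Valued.v (w - 1) ≤ c) (m : ℤ) : Valued.v (w ^ m - 1) ≤ c := by
  have hw1 : Valued.v w = 1 := by
    have : Valued.v ((w - 1) + 1) = Valued.v (1 : LaurentSeries (ZMod p)) :=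
      Valuation.map_add_eq_of_lt_right _ (by rw [Valued.v.map_one]; exact lt_of_le_of_lt hw hc)
    simpa using this
  have hw0 : w ≠ 0 := by
    intro h; rw [h, Valued.v.map_zero] at hw1; exact zero_ne_one hw1
  have hnat : ∀ n : ℕ, Valued.v (w ^ n - 1) ≤ c := by
    intro n
    induction n with
    | zero => simp
    | succ n ih =>
      have : w ^ (n + 1) - 1 = w ^ n * (w - 1) + (w ^ n - 1) := by ring
      rw [this]
      refine le_trans (Valued.v.map_add _ _) (max_le ?_ ih)
      rw [Valued.v.map_mul, Valued.v.map_pow, hw1, one_pow, one_mul]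
      exact hw
  rcases le_or_gt 0 m with h | h
  · lift m to ℕ using h
    rw [zpow_natCast]; exact hnat m
  · obtain ⟨n, rfl⟩ : ∃ n : ℕ, m = -(n : ℤ) := ⟨m.natAbs, by omega⟩
    have hwn : Valued.v (w ^ n) = 1 := by rw [Valued.v.map_pow, hw1, one_pow]
    have hne : (w : LaurentSeries (ZMod p)) ^ n ≠ 0 := pow_ne_zero _ hw0
    have : w ^ (-(n:ℤ)) - 1 = (1 - w ^ n) * (w ^ n)⁻¹ := by
      rw [zpow_neg, zpow_natCast, sub_mul, one_mul, mul_inv_cancel₀ hne]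
    rw [this, Valued.v.map_mul, map_inv₀, hwn, inv_one, mul_one, Valuation.map_sub_swap]
    exact hnat n

lemma val_sub_zpow (hℓ : 0 < ℓ) (n : ℕ) {a b : ℤ} (h : (p : ℤ) ^ n ∣ a - b) :
    Valued.v (uu p ℓ ^ a - uu p ℓ ^ b) ≤ bC (ℓ * p ^ n : ℕ) := by
  obtain ⟨k, hk⟩ := h
  have hu := u_ne p ℓ hℓ
  have hpos : 0 < ℓ * p ^ n := Nat.mul_pos hℓ (pow_pos (Fact.out (p := p.Prime)).pos n)
  have hclt : bC (ℓ * p ^ n : ℕ) < 1 := bC_lt_one (by exact_mod_cast hpos)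
  have key : Valued.v (uu p ℓ ^ (a - b) - 1) ≤ bC (ℓ * p ^ n : ℕ) := by
    have h1 : uu p ℓ ^ (a - b) = (1 + (Xvar p) ^ (ℓ * p ^ n)) ^ k := by
      rw [hk]
      have : ((p : ℤ) ^ n) = ((p ^ n : ℕ) : ℤ) := by push_cast; ring
      rw [this, zpow_mul, zpow_natCast]
      congr 1
      exact frob p ℓ n
    rw [h1]
    refine val_zpow_sub_one p hclt ?_ k
    rw [add_comm, add_sub_cancel_right]
    exact le_of_eq (val_Xpow p _)
  have : uu p ℓ ^ a - uu p ℓ ^ b = uu p ℓ ^ b * (uu p ℓ ^ (a - b) - 1) := by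
    rw [mul_sub, mul_one, ← zpow_add₀ hu]
    ring_nf
  rw [this, Valued.v.map_mul, map_zpow₀, val_u p ℓ hℓ, one_zpow, one_mul]
  exact key



-- dvd transfer
lemma int_dvd {z : ℤ} {n : ℕ} (h : ((p : ℤ_[p])) ^ n ∣ (z : ℤ_[p])) : (p : ℤ) ^ n ∣ z := by
  rw [← PadicInt.norm_int_le_pow_iff_dvd]
  exact (PadicInt.norm_le_pow_iff_mem_span_pow _ _).mpr (Ideal.mem_span_singleton.mpr h)

lemma mem_span_iff_dvd {x : ℤ_[p]} {n : ℕ} :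
    x ∈ Ideal.span {(p : ℤ_[p]) ^ n} ↔ (p : ℤ_[p]) ^ n ∣ x := Ideal.mem_span_singleton

lemma appr_spec_dvd (a : ℤ_[p]) (n : ℕ) : (p : ℤ_[p]) ^ n ∣ (a - a.appr n) :=
  (mem_span_iff_dvd p).mp (PadicInt.appr_spec n a)

lemma appr_sub_dvd (a : ℤ_[p]) {n m : ℕ} (h : n ≤ m) :
    (p : ℤ) ^ n ∣ ((a.appr m : ℤ) - (a.appr n : ℤ)) := by
  apply int_dvd
  have h1 : (p : ℤ_[p]) ^ n ∣ (a - a.appr m) :=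
    dvd_trans (pow_dvd_pow _ h) (appr_spec_dvd p a m)
  have h2 := appr_spec_dvd p a n
  have : ((((a.appr m : ℤ) - (a.appr n : ℤ)) : ℤ) : ℤ_[p]) = (a - a.appr n) - (a - a.appr m) := by
    push_cast; ring
  rw [this]
  exact dvd_sub h2 h1

lemma appr_congr_dvd {a b : ℤ_[p]} {n : ℕ} (h : (p : ℤ_[p]) ^ n ∣ (a - b)) {m : ℕ} (hm : n ≤ m) :
    (p : ℤ) ^ n ∣ ((a.appr m : ℤ) - (b.appr m : ℤ)) := by
  apply int_dvd
  have h1 : (p : ℤ_[p]) ^ n ∣ (a - a.appr m) :=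
    dvd_trans (pow_dvd_pow _ hm) (appr_spec_dvd p a m)
  have h2 : (p : ℤ_[p]) ^ n ∣ (b - b.appr m) :=
    dvd_trans (pow_dvd_pow _ hm) (appr_spec_dvd p b m)
  have : ((((a.appr m : ℤ) - (b.appr m : ℤ)) : ℤ) : ℤ_[p]) =
      (a - b) - (a - a.appr m) + (b - b.appr m) := by push_cast; ring
  rw [this]
  exact dvd_add (dvd_sub h h1) h2

lemma appr_add_dvd (a b : ℤ_[p]) (n : ℕ) :
    (p : ℤ) ^ n ∣ (((a + b).appr n : ℤ) - (a.appr n : ℤ) - (b.appr n : ℤ)) := by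
  apply int_dvd
  have h1 := appr_spec_dvd p (a + b) n
  have h2 := appr_spec_dvd p a n
  have h3 := appr_spec_dvd p b n
  have : (((((a + b).appr n : ℤ) - (a.appr n : ℤ) - (b.appr n : ℤ)) : ℤ) : ℤ_[p]) =
      (a - a.appr n) + (b - b.appr n) - ((a + b) - (a + b).appr n) := by push_cast; ring
  rw [this]
  exact dvd_sub (dvd_add h2 h3) h1

lemma appr_int_dvd (z : ℤ) (n : ℕ) :
    (p : ℤ) ^ n ∣ ((((z : ℤ_[p]).appr n) : ℤ) - z) := by
  apply int_dvd
  have h1 := appr_spec_dvd p (z : ℤ_[p]) n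
  have : ((((((z : ℤ_[p]).appr n) : ℤ) - z) : ℤ) : ℤ_[p]) = -((z : ℤ_[p]) - (z : ℤ_[p]).appr n) := by
    push_cast; ring
  rw [this]
  exact dvd_neg.mpr h1

-- closed ball in a valued field
lemma isClosed_ball (c : ℤₘ₀) :
    IsClosed {x : LaurentSeries (ZMod p) | Valued.v x ≤ c} := by
  rw [← isOpen_compl_iff]
  rw [isOpen_iff_mem_nhds]
  intro x hx
  simp only [Set.mem_compl_iff, Set.mem_setOf_eq, not_le] at hx
  have hx0 : Valued.v x ≠ 0 := by
    intro h; rw [h] at hx; exact not_lt_of_ge (zero_le') hx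
  rw [Valued.mem_nhds]
  refine ⟨Units.mk0 ((Valued.v : Valuation (LaurentSeries (ZMod p)) ℤₘ₀).restrict x) (by simpa using hx0), fun y hy => ?_⟩
  simp only [Set.mem_setOf_eq, Units.val_mk0] at hy ⊢
  have : Valued.v y = Valued.v x := by
    have : Valued.v ((y - x) + x) = Valued.v x :=
      Valuation.map_add_eq_of_lt_right _ ((Valuation.restrict_lt_iff _).mp hy)
    simpa using this
  simp only [Set.mem_compl_iff, Set.mem_setOf_eq, not_le, this]
  exact hx

-- existence of small scales
lemma exists_pow_lt (ℓ : ℕ) (hℓ : 0 < ℓ) (γ : (MonoidWithZeroHom.ValueGroup₀ (MonoidWithZeroHom.ofClass (Valued.v : Valuation (LaurentSeries (ZMod p)) ℤₘ₀)))ˣ) :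
    ∃ n : ℕ, bC (ℓ * p ^ n : ℕ) < MonoidWithZeroHom.ValueGroup₀.embedding γ.1 := by
  have hγ : (MonoidWithZeroHom.ValueGroup₀.embedding γ.1 : ℤₘ₀) ≠ 0 := (map_ne_zero _).mpr γ.ne_zero
  obtain ⟨g, hg⟩ := WithZero.ne_zero_iff_exists.mp hγ
  set D : ℤ := Multiplicative.toAdd g
  refine ⟨(-D).toNat, ?_⟩
  rw [← hg, bC]
  have hgD : g = Multiplicative.ofAdd D := rfl
  rw [hgD, WithZero.coe_lt_coe, Multiplicative.ofAdd_lt]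
  have h1 : ((-D).toNat : ℤ) < ((ℓ * p ^ (-D).toNat : ℕ) : ℤ) := by
    have hp1 : 1 < p := (Fact.out (p := p.Prime)).one_lt
    have := Nat.lt_pow_self (n := (-D).toNat) hp1
    have h2 : p ^ (-D).toNat ≤ ℓ * p ^ (-D).toNat := Nat.le_mul_of_pos_left _ hℓ
    exact_mod_cast lt_of_lt_of_le this h2
  omega




-- the approximating sequence
def sq (ℓ : ℕ) (a : ℤ_[p]) (n : ℕ) : LaurentSeries (ZMod p) := uu p ℓ ^ ((a.appr n : ℤ))

lemma val_sq_sub {ℓ : ℕ} (hℓ : 0 < ℓ) (a : ℤ_[p]) {n m k : ℕ} (hm : n ≤ m) (hk : n ≤ k) :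
    Valued.v (sq p ℓ a m - sq p ℓ a k) ≤ bC (ℓ * p ^ n : ℕ) := by
  apply val_sub_zpow p ℓ hℓ n
  have h1 := appr_sub_dvd p a hm
  have h2 := appr_sub_dvd p a hk
  have : (a.appr m : ℤ) - (a.appr k : ℤ) =
      ((a.appr m : ℤ) - (a.appr n : ℤ)) - ((a.appr k : ℤ) - (a.appr n : ℤ)) := by ring
  rw [this]
  exact dvd_sub h1 h2

lemma cauchy_sq {ℓ : ℕ} (hℓ : 0 < ℓ) (a : ℤ_[p]) : CauchySeq (sq p ℓ a) := by
  rw [(Valued.hasBasis_uniformity (LaurentSeries (ZMod p)) ℤₘ₀).cauchySeq_iff]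
  intro γ _
  obtain ⟨n, hn⟩ := exists_pow_lt p ℓ hℓ γ
  exact ⟨n, fun m hm k hk => (Valuation.restrict_lt_iff_lt_embedding _).mpr (lt_of_le_of_lt (val_sq_sub p hℓ a hk hm) hn)⟩

def phi (ℓ : ℕ) (a : ℤ_[p]) : LaurentSeries (ZMod p) := limUnder atTop (sq p ℓ a)

lemma tendsto_phi {ℓ : ℕ} (hℓ : 0 < ℓ) (a : ℤ_[p]) :
    Tendsto (sq p ℓ a) atTop (nhds (phi p ℓ a)) :=
  (cauchy_sq p hℓ a).tendsto_limUnder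

lemma tendsto_of_estimate {ℓ : ℕ} (hℓ : 0 < ℓ) (f : ℕ → LaurentSeries (ZMod p))
    (L : LaurentSeries (ZMod p)) (h : ∀ n, Valued.v (f n - L) ≤ bC (ℓ * p ^ n : ℕ)) :
    Tendsto f atTop (nhds L) := by
  have : Tendsto (fun n => f n - L) atTop (nhds 0) := by
    rw [(Valued.hasBasis_nhds_zero (LaurentSeries (ZMod p)) ℤₘ₀).tendsto_right_iff]
    intro γ _
    obtain ⟨n, hn⟩ := exists_pow_lt p ℓ hℓ γ
    filter_upwards [eventually_ge_atTop n] with m hm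
    refine (Valuation.restrict_lt_iff_lt_embedding _).mpr (lt_of_le_of_lt (le_trans (h m) (bC_mono ?_)) hn)
    have hp1 : 1 < p := (Fact.out (p := p.Prime)).one_lt
    have : p ^ n ≤ p ^ m := Nat.pow_le_pow_right (le_of_lt hp1) hm
    exact_mod_cast Nat.mul_le_mul_left ℓ this
  have := this.add (tendsto_const_nhds (x := L))
  simpa using this

lemma phi_spec {ℓ : ℕ} (hℓ : 0 < ℓ) (a : ℤ_[p]) (n : ℕ) :
    Valued.v (phi p ℓ a - sq p ℓ a n) ≤ bC (ℓ * p ^ n : ℕ) := by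
  have ht : Tendsto (fun m => sq p ℓ a m - sq p ℓ a n) atTop
      (nhds (phi p ℓ a - sq p ℓ a n)) := (tendsto_phi p hℓ a).sub_const _
  refine (isClosed_ball p _).mem_of_tendsto ht ?_
  filter_upwards [eventually_ge_atTop n] with m hm
  exact val_sq_sub p hℓ a hm (le_refl n)

lemma phi_int {ℓ : ℕ} (hℓ : 0 < ℓ) (z : ℤ) : phi p ℓ (z : ℤ_[p]) = uu p ℓ ^ z := by
  refine tendsto_nhds_unique (tendsto_phi p hℓ _) (tendsto_of_estimate p hℓ _ _ fun n => ?_)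
  exact val_sub_zpow p ℓ hℓ n (appr_int_dvd p z n)

lemma phi_add {ℓ : ℕ} (hℓ : 0 < ℓ) (a b : ℤ_[p]) :
    phi p ℓ (a + b) = phi p ℓ a * phi p ℓ b := by
  have hu := u_ne p ℓ hℓ
  have h1 : Tendsto (fun n => sq p ℓ a n * sq p ℓ b n) atTop
      (nhds (phi p ℓ a * phi p ℓ b)) := (tendsto_phi p hℓ a).mul (tendsto_phi p hℓ b)
  have h2 : Tendsto (fun n => sq p ℓ (a + b) n - sq p ℓ a n * sq p ℓ b n) atTop (nhds 0) := by
    refine tendsto_of_estimate p hℓ _ _ fun n => ?_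
    rw [sub_zero]
    have : sq p ℓ a n * sq p ℓ b n = uu p ℓ ^ ((a.appr n : ℤ) + (b.appr n : ℤ)) := by
      rw [zpow_add₀ hu]; rfl
    rw [this, sq]
    exact val_sub_zpow p ℓ hℓ n (by simpa [sub_sub] using appr_add_dvd p a b n)
  have h3 : Tendsto (sq p ℓ (a + b)) atTop (nhds (phi p ℓ a * phi p ℓ b)) := by
    have := h2.add h1
    simpa using this
  exact tendsto_nhds_unique (tendsto_phi p hℓ _) h3

lemma phi_zero {ℓ : ℕ} (hℓ : 0 < ℓ) : phi p ℓ 0 = 1 := by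
  have := phi_int p hℓ 0
  simpa using this

lemma phi_mul_neg {ℓ : ℕ} (hℓ : 0 < ℓ) (a : ℤ_[p]) : phi p ℓ a * phi p ℓ (-a) = 1 := by
  rw [← phi_add p hℓ, add_neg_cancel, phi_zero p hℓ]

lemma phi_ne_zero {ℓ : ℕ} (hℓ : 0 < ℓ) (a : ℤ_[p]) : phi p ℓ a ≠ 0 := by
  intro h
  have := phi_mul_neg p hℓ a
  rw [h, zero_mul] at this
  exact zero_ne_one this

lemma phi_inv {ℓ : ℕ} (hℓ : 0 < ℓ) (a : ℤ_[p]) : (phi p ℓ a)⁻¹ = phi p ℓ (-a) :=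
  inv_eq_of_mul_eq_one_right (phi_mul_neg p hℓ a)

lemma phi_lip {ℓ : ℕ} (hℓ : 0 < ℓ) {a b : ℤ_[p]} {n : ℕ}
    (h : (p : ℤ_[p]) ^ n ∣ (a - b)) :
    Valued.v (phi p ℓ a - phi p ℓ b) ≤ bC (ℓ * p ^ n : ℕ) := by
  have ht : Tendsto (fun m => sq p ℓ a m - sq p ℓ b m) atTop
      (nhds (phi p ℓ a - phi p ℓ b)) := (tendsto_phi p hℓ a).sub (tendsto_phi p hℓ b)
  refine (isClosed_ball p _).mem_of_tendsto ht ?_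
  filter_upwards [eventually_ge_atTop n] with m hm
  exact val_sub_zpow p ℓ hℓ n (appr_congr_dvd p h hm)

lemma phi_continuous {ℓ : ℕ} (hℓ : 0 < ℓ) : Continuous (phi p ℓ) := by
  rw [continuous_iff_continuousAt]
  intro a
  rw [ContinuousAt]
  intro s hs
  rw [Filter.mem_map]
  obtain ⟨γ, hγ⟩ := Valued.mem_nhds.mp hs
  obtain ⟨n, hn⟩ := exists_pow_lt p ℓ hℓ γ
  have hball : Metric.closedBall a ((p : ℝ) ^ (-(n : ℤ))) ∈ nhds a :=
    Metric.closedBall_mem_nhds a (zpow_pos (by exact_mod_cast (Fact.out (p := p.Prime)).pos) _)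
  refine Filter.mem_of_superset hball fun b hb => ?_
  apply hγ
  simp only [Set.mem_setOf_eq]
  have hdvd : (p : ℤ_[p]) ^ n ∣ (b - a) := by
    rw [← mem_span_iff_dvd, ← PadicInt.norm_le_pow_iff_mem_span_pow]
    rw [Metric.mem_closedBall, dist_eq_norm] at hb
    exact hb
  exact (Valuation.restrict_lt_iff_lt_embedding _).mpr (lt_of_le_of_lt (phi_lip p hℓ hdvd) hn)


-- coefficient computation for (1 + single d 1)^k
lemma coeff_one_add_single_pow {d : ℤ} (hd : 0 < d) (k : ℕ) :
    (∀ j : ℤ, j < 0 → ((1 + HahnSeries.single d (1 : ZMod p)) ^ k).coeff j = 0) ∧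
    ((1 + HahnSeries.single d (1 : ZMod p)) ^ k).coeff 0 = 1 ∧
    ((1 + HahnSeries.single d (1 : ZMod p)) ^ k).coeff d = (k : ZMod p) := by
  induction k with
  | zero =>
    refine ⟨fun j hj => ?_, ?_, ?_⟩
    · rw [pow_zero, HahnSeries.coeff_one, if_neg (by omega)]
    · rw [pow_zero, HahnSeries.coeff_one, if_pos rfl]
    · rw [pow_zero, HahnSeries.coeff_one, if_neg (by omega)]
      simp
  | succ k ih =>
    obtain ⟨ih1, ih2, ih3⟩ := ih
    set g := (1 + HahnSeries.single d (1 : ZMod p)) ^ k with hg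
    have hstep : (1 + HahnSeries.single d (1 : ZMod p)) ^ (k + 1) =
        g + g * HahnSeries.single d (1 : ZMod p) := by
      rw [pow_succ, mul_add, mul_one]
    have hms : ∀ j : ℤ, (g * HahnSeries.single d (1 : ZMod p)).coeff j = g.coeff (j - d) := by
      intro j
      have := HahnSeries.coeff_mul_single_add (r := (1 : ZMod p)) (x := g) (a := j - d) (b := d)
      rw [sub_add_cancel] at this
      rw [this, mul_one]
    refine ⟨fun j hj => ?_, ?_, ?_⟩
    · rw [hstep, HahnSeries.coeff_add, hms, ih1 j hj, ih1 (j - d) (by omega), add_zero]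
    · rw [hstep, HahnSeries.coeff_add, hms, ih2, ih1 (0 - d) (by omega), add_zero]
    · rw [hstep, HahnSeries.coeff_add, hms, ih3, sub_self, ih2]
      push_cast
      ring

lemma phi_eq_one_iff {ℓ : ℕ} (hℓ : 0 < ℓ) {c : ℤ_[p]} (h : phi p ℓ c = 1) : c = 0 := by
  by_contra hc
  set n : ℕ := c.valuation with hn
  have hval : (c.valuation : ℤ) = (n : ℤ) := by
    rfl
  have hnorm : ‖c‖ = (p : ℝ) ^ (-(n : ℤ)) := by
    rw [PadicInt.norm_eq_zpow_neg_valuation hc]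
  have hp1 : (1 : ℝ) < (p : ℝ) := by exact_mod_cast (Fact.out (p := p.Prime)).one_lt
  -- p^n ∣ c but not p^(n+1)
  have h1 : (p : ℤ_[p]) ^ n ∣ c := by
    rw [← mem_span_iff_dvd, ← PadicInt.norm_le_pow_iff_mem_span_pow, hnorm]
  have h2 : ¬ (p : ℤ_[p]) ^ (n + 1) ∣ c := by
    intro hdvd
    have hle := (PadicInt.norm_le_pow_iff_mem_span_pow c (n+1)).mpr (mem_span_iff_dvd p |>.mpr hdvd)
    rw [hnorm] at hle
    push_cast at hle
    have h3 : (p:ℝ) ^ (-((n:ℤ)+1)) < (p:ℝ) ^ (-(n:ℤ)) := by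
      apply (zpow_lt_zpow_iff_right₀ hp1).mpr; omega
    linarith
  set m : ℕ := c.appr (n + 1) with hm
  have hmd1 : (p : ℤ) ^ n ∣ (m : ℤ) := by
    apply int_dvd
    have hcm : (p : ℤ_[p]) ^ n ∣ (c - m) :=
      dvd_trans (pow_dvd_pow _ (Nat.le_succ n)) (appr_spec_dvd p c (n+1))
    have : ((m : ℤ) : ℤ_[p]) = c - (c - (m : ℤ_[p])) := by push_cast; ring
    rw [this]
    exact dvd_sub h1 (by exact_mod_cast hcm)
  have hmd2 : ¬ (p : ℤ) ^ (n + 1) ∣ (m : ℤ) := by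
    intro hdvd
    apply h2
    have hcm : (p : ℤ_[p]) ^ (n+1) ∣ (c - m) := appr_spec_dvd p c (n+1)
    obtain ⟨t, ht⟩ := hdvd
    have hmp : (p : ℤ_[p]) ^ (n+1) ∣ (m : ℤ_[p]) := by
      refine ⟨((t : ℤ) : ℤ_[p]), ?_⟩
      have := congrArg (fun z : ℤ => ((z : ℤ) : ℤ_[p])) ht
      push_cast at this ⊢
      exact this
    have : c = (c - (m : ℤ_[p])) + (m : ℤ_[p]) := by ring
    rw [this]
    exact dvd_add hcm hmp
  -- write m = p^n * k with p ∤ k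
  have hmn : p ^ n ∣ m := by exact_mod_cast hmd1
  obtain ⟨k, hk⟩ := hmn
  have hpk : ¬ p ∣ k := by
    intro hdvd
    apply hmd2
    obtain ⟨t, ht⟩ := hdvd
    exact_mod_cast (⟨t, by rw [hk, ht]; ring⟩ : p ^ (n+1) ∣ m)
  have hk0 : (k : ZMod p) ≠ 0 := fun h0 =>
    hpk ((ZMod.natCast_eq_zero_iff k p).mp h0)
  -- the coefficient of uu^m at ℓ * p^n is k
  have hppos : 0 < p ^ n := pow_pos (Fact.out (p := p.Prime)).pos n
  have hdpos : (0 : ℤ) < ((ℓ * p ^ n : ℕ) : ℤ) := by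
    have : 0 < ℓ * p ^ n := Nat.mul_pos hℓ hppos
    exact_mod_cast this
  have hXl : (Xvar p) ^ (ℓ * p ^ n) = HahnSeries.single ((ℓ * p ^ n : ℕ) : ℤ) (1 : ZMod p) :=
    Xpow p _
  have hum : uu p ℓ ^ m = (1 + HahnSeries.single ((ℓ * p ^ n : ℕ) : ℤ) (1 : ZMod p)) ^ k := by
    rw [hk, pow_mul, frob p ℓ n, hXl]
  have hcoeff : (uu p ℓ ^ m).coeff ((ℓ * p ^ n : ℕ) : ℤ) = (k : ZMod p) := by
    rw [hum]
    exact (coeff_one_add_single_pow p hdpos k).2.2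
  -- but phi c = 1 forces this coefficient to vanish
  have hspec := phi_spec p hℓ c (n + 1)
  rw [h] at hspec
  have hsq : sq p ℓ c (n + 1) = uu p ℓ ^ m := by
    rw [sq, ← hm, zpow_natCast]
  rw [hsq] at hspec
  have hlt : ((ℓ * p ^ n : ℕ) : ℤ) < ((ℓ * p ^ (n+1) : ℕ) : ℤ) := by
    have : ℓ * p ^ n < ℓ * p ^ (n + 1) := by
      have hpow : p ^ n < p ^ (n + 1) :=
        Nat.pow_lt_pow_right (Fact.out (p := p.Prime)).one_lt (Nat.lt_succ_self n)
      exact Nat.mul_lt_mul_of_le_of_lt (le_refl ℓ) hpow hℓ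
    exact_mod_cast this
  have hzero : ((1 : LaurentSeries (ZMod p)) - uu p ℓ ^ m).coeff ((ℓ * p ^ n : ℕ) : ℤ) = 0 := by
    refine LaurentSeries.coeff_zero_of_lt_valuation (ZMod p) ?_ hlt
    exact hspec
  rw [HahnSeries.coeff_sub, HahnSeries.coeff_one, if_neg (by omega), hcoeff] at hzero
  apply hk0
  rw [← neg_eq_zero, ← hzero]
  ring

lemma phi_injective {ℓ : ℕ} (hℓ : 0 < ℓ) : Function.Injective (phi p ℓ) := by
  intro a b hab
  have h1 : phi p ℓ (a - b) * phi p ℓ b = phi p ℓ a := by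
    rw [← phi_add p hℓ, sub_add_cancel]
  have h2 : phi p ℓ (a - b) = 1 := by
    have hb := phi_ne_zero p hℓ b
    rw [hab] at h1
    exact mul_right_cancel₀ hb (by rw [h1, one_mul])
  exact sub_eq_zero.mp (phi_eq_one_iff p hℓ h2)


lemma range_phi {ℓ : ℕ} (hℓ : 0 < ℓ) : Set.range (phi p ℓ) = Hclos p ℓ := by
  apply subset_antisymm
  · rintro _ ⟨a, rfl⟩
    refine mem_closure_of_tendsto (tendsto_phi p hℓ a) ?_
    filter_upwards with n
    exact ⟨(a.appr n : ℤ), rfl⟩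
  · refine closure_minimal ?_ (isCompact_range (phi_continuous p hℓ)).isClosed
    rintro z ⟨m, rfl⟩
    exact ⟨(m : ℤ_[p]), phi_int p hℓ m⟩

lemma isClosed_P (ℓ : ℕ) : IsClosed (powerSeriesInXl p ℓ) := by
  rw [← isOpen_compl_iff, isOpen_iff_mem_nhds]
  intro z hz
  simp only [Set.mem_compl_iff, powerSeriesInXl, Set.mem_setOf_eq, not_forall] at hz
  push_neg at hz
  obtain ⟨j, hj, hjk⟩ := hz
  rw [Valued.mem_nhds]
  refine ⟨Units.mk0 ((Valued.v : Valuation (LaurentSeries (ZMod p)) ℤₘ₀).restrict (HahnSeries.single (j+1) (1 : ZMod p))) (by rw [ne_eq, Valuation.restrict_eq_zero_iff, Valuation.zero_iff]; exact HahnSeries.single_ne_zero one_ne_zero), fun y hy => ?_⟩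
  simp only [Set.mem_compl_iff, powerSeriesInXl, Set.mem_setOf_eq, not_forall]
  push_neg
  refine ⟨j, ?_, hjk⟩
  have hcoeff : y.coeff j = z.coeff j := by
    refine LaurentSeries.eq_coeff_of_valuation_sub_lt (ZMod p) (le_of_lt ?_) (lt_add_one j)
    have := (Valuation.restrict_lt_iff _).mp hy
    rwa [LaurentSeries.valuation_single_zpow] at this
  rw [hcoeff]
  exact hj

lemma mem_P_mul {ℓ : ℕ} {f g : LaurentSeries (ZMod p)} (hf : f ∈ powerSeriesInXl p ℓ)
    (hg : g ∈ powerSeriesInXl p ℓ) : f * g ∈ powerSeriesInXl p ℓ := by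
  intro j hj
  have hsupp : j ∈ (f * g).support := hj
  have hmem := HahnSeries.support_mul_subset hsupp
  obtain ⟨j1, hj1, j2, hj2, rfl⟩ := Set.mem_add.mp hmem
  obtain ⟨k1, hk1⟩ := hf j1 hj1
  obtain ⟨k2, hk2⟩ := hg j2 hj2
  exact ⟨k1 + k2, by rw [hk1, hk2]; push_cast; ring⟩

lemma one_mem_P (ℓ : ℕ) : (1 : LaurentSeries (ZMod p)) ∈ powerSeriesInXl p ℓ := by
  intro j hj
  refine ⟨0, ?_⟩
  by_contra hne
  rw [HahnSeries.coeff_one, if_neg (by simpa using hne)] at hj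
  exact hj rfl

lemma u_mem_P (ℓ : ℕ) : uu p ℓ ∈ powerSeriesInXl p ℓ := by
  intro j hj
  rw [uu, Xpow, HahnSeries.coeff_add, HahnSeries.coeff_one, HahnSeries.coeff_single] at hj
  by_cases h0 : j = 0
  · exact ⟨0, by simp [h0]⟩
  · by_cases hl : j = ((ℓ : ℕ) : ℤ)
    · exact ⟨1, by simp [hl]⟩
    · exfalso
      rw [if_neg h0, if_neg hl] at hj
      simp at hj

lemma upow_mem_P (ℓ : ℕ) (m : ℕ) : uu p ℓ ^ m ∈ powerSeriesInXl p ℓ := by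
  induction m with
  | zero => simpa using one_mem_P p ℓ
  | succ m ih =>
    rw [pow_succ]
    exact mem_P_mul p ih (u_mem_P p ℓ)

lemma H_sub_P {ℓ : ℕ} (hℓ : 0 < ℓ) : Hclos p ℓ ⊆ powerSeriesInXl p ℓ := by
  rw [← range_phi p hℓ]
  rintro _ ⟨a, rfl⟩
  refine (isClosed_P p ℓ).mem_of_tendsto (tendsto_phi p hℓ a) ?_
  filter_upwards with n
  have : sq p ℓ a n = uu p ℓ ^ (a.appr n) := by rw [sq, zpow_natCast]
  rw [this]
  exact upow_mem_P p ℓ _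

end PfAux

/-- `H` is a compact subgroup of `K^×`, `H` is isomorphic as a topological
group to the additive group `ℤ_p` of `p`-adic integers, and `H ⊆ 𝔽[[X^ℓ]]`. -/
theorem closure_zpowers_one_add_Xl_compact_padic_subgroup
    (ℓ : ℕ) (hℓ : 2 ≤ ℓ) (hcop : Nat.Coprime p ℓ) :
    IsCompact (Hclos p ℓ) ∧
    ((1 : LaurentSeries (ZMod p)) ∈ Hclos p ℓ ∧
      (∀ x ∈ Hclos p ℓ, ∀ y ∈ Hclos p ℓ, x * y ∈ Hclos p ℓ) ∧
      (∀ x ∈ Hclos p ℓ, x ≠ 0 ∧ x⁻¹ ∈ Hclos p ℓ)) ∧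
    (∃ e : ℤ_[p] ≃ₜ (Hclos p ℓ),
      ∀ a b : ℤ_[p], ((e (a + b) : LaurentSeries (ZMod p))) =
        (e a : LaurentSeries (ZMod p)) * (e b : LaurentSeries (ZMod p))) ∧
    Hclos p ℓ ⊆ powerSeriesInXl p ℓ := by
  have hℓ0 : 0 < ℓ := by omega
  have hrange := PfAux.range_phi p hℓ0
  refine ⟨?_, ⟨?_, ?_, ?_⟩, ?_, PfAux.H_sub_P p hℓ0⟩
  · rw [← hrange]
    exact isCompact_range (PfAux.phi_continuous p hℓ0)
  · rw [← hrange]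
    exact ⟨0, PfAux.phi_zero p hℓ0⟩
  · rw [← hrange]
    rintro _ ⟨a, rfl⟩ _ ⟨b, rfl⟩
    exact ⟨a + b, PfAux.phi_add p hℓ0 a b⟩
  · rw [← hrange]
    rintro _ ⟨a, rfl⟩
    exact ⟨PfAux.phi_ne_zero p hℓ0 a, ⟨-a, (PfAux.phi_inv p hℓ0 a).symm⟩⟩
  · have hmem : ∀ a : ℤ_[p], PfAux.phi p ℓ a ∈ Hclos p ℓ := by
      rw [← hrange]; exact fun a => ⟨a, rfl⟩
    have hbij : Function.Bijective (fun a : ℤ_[p] => (⟨PfAux.phi p ℓ a, hmem a⟩ : Hclos p ℓ)) := by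
      constructor
      · intro a b hab
        exact PfAux.phi_injective p hℓ0 (congrArg Subtype.val hab)
      · intro x
        have hx : (x : LaurentSeries (ZMod p)) ∈ Set.range (PfAux.phi p ℓ) := by
          rw [hrange]; exact x.2
        obtain ⟨a, ha⟩ := hx
        exact ⟨a, Subtype.ext ha⟩
    have hc : Continuous (Equiv.ofBijective _ hbij) :=
      Continuous.subtype_mk (PfAux.phi_continuous p hℓ0) _
    refine ⟨hc.homeoOfEquivCompactToT2, fun a b => ?_⟩
    exact PfAux.phi_add p hℓ0 a b
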